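/- arXiv:1904.11729 — 15 statements merged into one kernel-verified Lean document; each statement's English description precedes it below -/
import Mathlib

section
/- Every cyclic semimodule over a commutative semiring is a multiplication semimodule. -/
namespace Submodule

theorem colon_singleton_smul_span_singleton {R M : Type*} [CommSemiring R] [AddCommMonoid M]
    [Module R M] (N : Submodule R M) (m : M) :
    N.colon {m} • span R {m} = N ⊓ span R {m} := by
  ext x
  simp only [mem_smul_span_singleton, mem_colon_singleton, mem_inf, mem_span_singleton]
  constructor
  · rintro ⟨r, hr, rfl⟩
    exact ⟨hr, r, rfl⟩
  · rintro ⟨hx, r, rfl⟩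
    exact ⟨r, hx, rfl⟩

end Submodule

/-- Every cyclic semimodule over a commutative semiring is a multiplication semimodule. -/
theorem cyclic_is_multiplication {S M : Type*} [CommSemiring S] [AddCommMonoid M]
    [Module S M] (m : M) (hcyc : (⊤ : Submodule S M) = Submodule.span S {m}) :
    ∀ N : Submodule S M, ∃ I : Ideal S, N = I • (⊤ : Submodule S M) := by
  intro N
  refine ⟨N.colon {m}, ?_⟩
  rw [hcyc, Submodule.colon_singleton_smul_span_singleton, ← hcyc, inf_top_eq]
end

section
/- If f : M → N is a surjective homomorphism of S-semimodules and M is a multiplication S-semimodule, then N is a multiplication S-semimodule. -/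
theorem Submodule.map_smul_top_of_surjective {R M N : Type*} [CommSemiring R]
    [AddCommMonoid M] [Module R M] [AddCommMonoid N] [Module R N]
    (I : Ideal R) {f : M →ₗ[R] N} (hf : Function.Surjective f) :
    (I • ⊤ : Submodule R M).map f = I • ⊤ := by
  rw [Submodule.map_smul'', Submodule.map_top, LinearMap.range_eq_top.mpr hf]

/-- A surjective homomorphic image of a multiplication semimodule is a
multiplication semimodule. -/
theorem multiplication_of_surjective {S M N : Type*} [CommSemiring S]
    [AddCommMonoid M] [Module S M] [AddCommMonoid N] [Module S N]
    (f : M →ₗ[S] N) (hf : Function.Surjective f)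
    (hM : ∀ P : Submodule S M, ∃ I : Ideal S, P = I • (⊤ : Submodule S M)) :
    ∀ Q : Submodule S N, ∃ I : Ideal S, Q = I • (⊤ : Submodule S N) := by
  intro Q
  obtain ⟨I, hI⟩ := hM (Q.comap f)
  refine ⟨I, ?_⟩
  rw [← Submodule.map_comap_eq_of_surjective hf Q, hI, Submodule.map_smul_top_of_surjective I hf]
end

section
/- If M is a multiplication S-semimodule, then for every maximal ideal p of S, either M = {m ∈ M : m = qm for some q ∈ p} or M is p-cyclic. -/
/-!
If `pM = M`, then for `Sm = IM` we get `Sm = I(pM) = p(IM) = p(Sm)`, so `m = qm` with `q ∈ p`.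
Otherwise pick `m ∉ pM` and write `Sm = IM`; then `I ⊄ p`, and any `b ∈ I \ p` satisfies
`bM ⊆ Sm`. Maximality of `p` gives `ab + q = 1` with `q ∈ p`, and `t = ab` witnesses
that `M` is `p`-cyclic.
-/

section

open Submodule

variable {S : Type*} [CommSemiring S]

def IsPCyclic (p : Ideal S) (M : Type*) [AddCommMonoid M] [Module S M] : Prop :=
  ∃ m : M, ∃ t : S, ∃ q ∈ p, t + q = 1 ∧ ∀ x : M, t • x ∈ span S {m}

variable {M : Type*} [AddCommMonoid M] [Module S M]

theorem exists_mem_smul_eq_self_of_smul_top_eq_top {p I : Ideal S}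
    (hp : p • (⊤ : Submodule S M) = ⊤) {m : M} (hI : span S {m} = I • ⊤) :
    ∃ q ∈ p, m = q • m := by
  have hspan : span S {m} = p • span S {m} := calc
    span S {m} = I • p • ⊤ := by rw [hI, hp]
    _ = p • I • ⊤ := by rw [← smul_assoc, ← smul_assoc, smul_eq_mul, smul_eq_mul, mul_comm]
    _ = p • span S {m} := by rw [hI]
  have hm : m ∈ p • span S {m} := hspan ▸ mem_span_singleton_self m
  obtain ⟨q, hq, hqm⟩ := mem_smul_span_singleton.mp hm
  exact ⟨q, hq, hqm.symm⟩

theorem isPCyclic_of_smul_mem_span_singleton {p : Ideal S} (hp : p.IsMaximal) {b : S}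
    (hb : b ∉ p) {m : M} (hbm : ∀ x : M, b • x ∈ span S {m}) : IsPCyclic p M := by
  obtain ⟨a, q, hq, hab⟩ := hp.exists_inv hb
  exact ⟨m, a * b, q, hq, hab, fun x => mul_smul a b x ▸ smul_mem _ a (hbm x)⟩

end

/-- If M is a multiplication semimodule, then for every maximal ideal p of S,
either M = {m : m = qm for some q ∈ p} or M is p-cyclic. -/
theorem pcyclic_or_eq_of_multiplication {S M : Type*} [CommSemiring S]
    [AddCommMonoid M] [Module S M]
    (hM : ∀ N : Submodule S M, ∃ I : Ideal S, N = I • (⊤ : Submodule S M)) :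
    ∀ p : Ideal S, p.IsMaximal →
      (∀ m : M, ∃ q ∈ p, m = q • m) ∨
      (∃ m : M, ∃ t : S, ∃ q ∈ p, t + q = 1 ∧
        ∀ x : M, t • x ∈ Submodule.span S {m}) := by
  intro p hp
  by_cases hpM : p • (⊤ : Submodule S M) = ⊤
  · left
    intro m
    obtain ⟨I, hI⟩ := hM (Submodule.span S {m})
    exact exists_mem_smul_eq_self_of_smul_top_eq_top hpM hI
  right
  obtain ⟨m, -, hm⟩ := SetLike.exists_of_lt (lt_top_iff_ne_top.mpr hpM)
  obtain ⟨I, hI⟩ := hM (Submodule.span S {m})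
  obtain ⟨b, hbI, hbp⟩ : ∃ b ∈ I, b ∉ p := SetLike.not_le_iff_exists.mp fun hIp =>
    hm (Submodule.smul_mono_left hIp (hI ▸ Submodule.mem_span_singleton_self m))
  exact isPCyclic_of_smul_mem_span_singleton hp hbp fun x =>
    hI ▸ Submodule.smul_mem_smul hbI Submodule.mem_top
end

section
/- If (S, m) is a local commutative semiring and M is a multiplication S-semimodule with M ≠ mM, then M is cyclic. -/
/-! Pick `x ∉ mM`. Since `M` is a multiplication semimodule, `Sx = IM` for some ideal `I`, and
`I ⊄ m` because otherwise `x ∈ Sx = IM ⊆ mM`. As `m` is the only maximal ideal, `I = S`,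
so `Sx = SM = M`. -/

theorem Ideal.eq_top_of_not_le_of_forall_isMaximal_eq {S : Type*} [Semiring S] {m I : Ideal S}
    (hloc : ∀ p : Ideal S, p.IsMaximal → p = m) (hI : ¬ I ≤ m) : I = ⊤ := by
  by_contra hI_ne_top
  obtain ⟨p, hp, hIp⟩ := I.exists_le_maximal hI_ne_top
  exact hI (hloc p hp ▸ hIp)

theorem Submodule.span_singleton_eq_top_of_notMem_smul_top {S M : Type*} [CommSemiring S]
    [AddCommMonoid M] [Module S M] {m I : Ideal S} (hloc : ∀ p : Ideal S, p.IsMaximal → p = m)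
    {x : M} (hI : span S {x} = I • (⊤ : Submodule S M)) (hx : x ∉ m • (⊤ : Submodule S M)) :
    span S {x} = ⊤ := by
  have hIm : ¬ I ≤ m := fun hle =>
    hx (smul_mono_left hle (hI ▸ mem_span_singleton_self x))
  rw [hI, Ideal.eq_top_of_not_le_of_forall_isMaximal_eq hloc hIm, top_smul]

theorem cyclic_of_local_multiplication_general {S M : Type*} [CommSemiring S]
    [AddCommMonoid M] [Module S M] (m : Ideal S)
    (hloc : ∀ p : Ideal S, p.IsMaximal → p = m)
    (hM : ∀ N : Submodule S M, ∃ I : Ideal S, N = I • (⊤ : Submodule S M))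
    (hne : m • (⊤ : Submodule S M) ≠ ⊤) :
    ∃ n : M, (⊤ : Submodule S M) = Submodule.span S {n} := by
  obtain ⟨x, hx⟩ := SetLike.exists_not_mem_of_ne_top _ hne
  obtain ⟨I, hI⟩ := hM (Submodule.span S {x})
  exact ⟨x, (Submodule.span_singleton_eq_top_of_notMem_smul_top hloc hI hx).symm⟩

/-- Over a local semiring (S, m), a multiplication semimodule M with M ≠ mM is
cyclic. -/
theorem cyclic_of_local_multiplication {S M : Type*} [CommSemiring S]
    [AddCommMonoid M] [Module S M] (m : Ideal S) (hm : m.IsMaximal)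
    (hloc : ∀ p : Ideal S, p.IsMaximal → p = m)
    (hM : ∀ N : Submodule S M, ∃ I : Ideal S, N = I • (⊤ : Submodule S M))
    (hne : m • (⊤ : Submodule S M) ≠ ⊤) :
    ∃ n : M, (⊤ : Submodule S M) = Submodule.span S {n} :=
  cyclic_of_local_multiplication_general m hloc hM hne
end

section
/- Let S be a yoked entire commutative semiring and M a cancellative faithful multiplication S-semimodule. Then M is multiplicatively cancellative: for all s, s' ∈ S and nonzero m ∈ M, sm = s'm implies s = s'. -/
/-!
A nonzero `m` is torsion-free: if `t • m = 0` and `Sm = IM`, then every `a ∈ I` satisfies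
`(a * t) M = t (a M) ⊆ t (S m) = 0`, so `a * t = 0` by faithfulness and `a = 0` since `S` is entire;
hence `Sm = 0`. Cancellation then follows by writing `s' = s + t` (or `s = s' + t`), which is
possible because `S` is yoked, and cancelling `s • m` in `s • m + t • m = s • m`.
-/

section

variable {S M : Type*} [CommSemiring S] [AddCommMonoid M] [Module S M]

theorem smul_eq_zero_of_add_eq_of_smul_eq (hcanc : ∀ m m1 m2 : M, m + m1 = m + m2 → m1 = m2)
    {s s' t : S} {m : M} (ht : s + t = s') (h : s • m = s' • m) : t • m = 0 :=
  hcanc (s • m) _ _ (by rw [add_zero, ← add_smul, ht, h])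

theorem eq_of_smul_eq_smul_of_yoked (hyoked : ∀ a b : S, ∃ t : S, a + t = b ∨ b + t = a)
    (hcanc : ∀ m m1 m2 : M, m + m1 = m + m2 → m1 = m2) {m : M}
    (htors : ∀ t : S, t • m = 0 → t = 0) {s s' : S} (h : s • m = s' • m) : s = s' := by
  obtain ⟨t, ht | ht⟩ := hyoked s s'
  · rw [← ht, htors t (smul_eq_zero_of_add_eq_of_smul_eq hcanc ht h), add_zero]
  · rw [← ht, htors t (smul_eq_zero_of_add_eq_of_smul_eq hcanc ht h.symm), add_zero]

theorem mul_smul_eq_zero_of_span_eq_smul_top {I : Ideal S} {m : M}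
    (hI : Submodule.span S {m} = I • (⊤ : Submodule S M)) {a t : S} (ha : a ∈ I)
    (htm : t • m = 0) (x : M) : (a * t) • x = 0 := by
  have hax : a • x ∈ Submodule.span S {m} := hI ▸ Submodule.smul_mem_smul ha Submodule.mem_top
  obtain ⟨c, hc⟩ := Submodule.mem_span_singleton.1 hax
  calc (a * t) • x = t • (a • x) := by rw [mul_comm, mul_smul]
    _ = c • (t • m) := by rw [← hc, smul_comm]
    _ = 0 := by rw [htm, smul_zero]

theorem eq_zero_of_smul_eq_zero_of_multiplication
    (hentire : ∀ a b : S, a * b = 0 → a = 0 ∨ b = 0)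
    (hfaith : ∀ t : S, (∀ x : M, t • x = 0) → t = 0)
    (hM : ∀ N : Submodule S M, ∃ I : Ideal S, N = I • (⊤ : Submodule S M))
    {t : S} {m : M} (hm : m ≠ 0) (htm : t • m = 0) : t = 0 := by
  by_contra ht
  obtain ⟨I, hI⟩ := hM (Submodule.span S {m})
  have hI_bot : I = ⊥ := (Submodule.eq_bot_iff I).2 fun a ha =>
    (hentire a t (hfaith _ (mul_smul_eq_zero_of_span_eq_smul_top hI ha htm))).resolve_right ht
  exact hm (Submodule.span_singleton_eq_bot.1 (by rw [hI, hI_bot, Submodule.bot_smul]))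

end

/-- Over a yoked entire semiring, a cancellative faithful multiplication
semimodule is multiplicatively cancellative. -/
theorem MC_of_cancellative_faithful_multiplication {S M : Type*} [CommSemiring S]
    [AddCommMonoid M] [Module S M]
    (hyoked : ∀ a b : S, ∃ t : S, a + t = b ∨ b + t = a)
    (hentire : ∀ a b : S, a * b = 0 → a = 0 ∨ b = 0)
    (hcanc : ∀ m m1 m2 : M, m + m1 = m + m2 → m1 = m2)
    (hfaith : ∀ t : S, (∀ x : M, t • x = 0) → t = 0)
    (hM : ∀ N : Submodule S M, ∃ I : Ideal S, N = I • (⊤ : Submodule S M)) :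
    ∀ (s s' : S) (m : M), m ≠ 0 → s • m = s' • m → s = s' := by
  intro s s' m hm
  exact eq_of_smul_eq_smul_of_yoked hyoked hcanc fun _ =>
    eq_zero_of_smul_eq_zero_of_multiplication hentire hfaith hM hm
end

section
/- Let S be a yoked semidomain and M a cancellative torsionfree S-semimodule. Then M is multiplicatively cancellative: sm = s'm with m ≠ 0 implies s = s'. -/
/-!
If `s • m = s' • m` with `m ≠ 0`, yokedness writes one scalar as the other plus some `t`, say
`s' = s + t`. Additive cancellation in `M` turns `s • m = s • m + t • m` into `t • m = 0`, and
torsionfreeness then forces `t = 0`.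
-/

def IsYoked (S : Type*) [Add S] : Prop :=
  ∀ a b : S, ∃ t : S, a + t = b ∨ b + t = a

theorem NoZeroSMulDivisors.of_isSMulRegular {S M : Type*} [Zero S] [Zero M] [SMulZeroClass S M]
    (h : ∀ a : S, a ≠ 0 → IsSMulRegular M a) : NoZeroSMulDivisors S M where
  eq_zero_or_eq_zero_of_smul_eq_zero {a _} hax :=
    or_iff_not_imp_left.2 fun ha => h a ha (hax.trans (smul_zero a).symm)

section Semimodule

variable {S M : Type*} [Semiring S] [AddCommMonoid M] [IsLeftCancelAdd M] [Module S M]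
  [NoZeroSMulDivisors S M]

theorem eq_zero_of_smul_eq_add_smul {s t : S} {m : M} (hm : m ≠ 0)
    (h : s • m = (s + t) • m) : t = 0 := by
  rw [add_smul, left_eq_add] at h
  exact (eq_zero_or_eq_zero_of_smul_eq_zero h).resolve_right hm

theorem smul_left_injective_of_isYoked (hS : IsYoked S) {m : M} (hm : m ≠ 0) :
    Function.Injective (· • m : S → M) := by
  intro s s' h
  obtain ⟨t, rfl | rfl⟩ := hS s s'
  · rw [eq_zero_of_smul_eq_add_smul hm h, add_zero]
  · rw [eq_zero_of_smul_eq_add_smul hm h.symm, add_zero]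

end Semimodule

theorem MC_of_cancellative_torsionfree_general {S M : Type*} [CommSemiring S]
    [AddCommMonoid M] [Module S M]
    (hyoked : ∀ a b : S, ∃ t : S, a + t = b ∨ b + t = a)
    (hcanc : ∀ m m1 m2 : M, m + m1 = m + m2 → m1 = m2)
    (htf : ∀ a : S, a ≠ 0 → ∀ x y : M, a • x = a • y → x = y) :
    ∀ (s s' : S) (m : M), m ≠ 0 → s • m = s' • m → s = s' := by
  have : IsLeftCancelAdd M := ⟨hcanc⟩
  have : NoZeroSMulDivisors S M :=
    .of_isSMulRegular fun a ha _ _ => htf a ha _ _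
  exact fun s s' m hm h => smul_left_injective_of_isYoked hyoked hm h

/-- Over a yoked semidomain, a cancellative torsionfree semimodule is
multiplicatively cancellative. -/
theorem MC_of_cancellative_torsionfree {S M : Type*} [CommSemiring S]
    [AddCommMonoid M] [Module S M]
    (hyoked : ∀ a b : S, ∃ t : S, a + t = b ∨ b + t = a)
    (hdom : ∀ a : S, a ≠ 0 → ∀ b c : S, a * b = a * c → b = c)
    (hcanc : ∀ m m1 m2 : M, m + m1 = m + m2 → m1 = m2)
    (htf : ∀ a : S, a ≠ 0 → ∀ x y : M, a • x = a • y → x = y) :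
    ∀ (s s' : S) (m : M), m ≠ 0 → s • m = s' • m → s = s' :=
  MC_of_cancellative_torsionfree_general hyoked hcanc htf
end

section
/- Let p be a prime ideal of S and M a multiplicatively cancellative multiplication S-semimodule. If a ∈ S and x ∈ M satisfy ax ∈ pM, then a ∈ p or x ∈ pM. -/
/-! Write `span {x} = I • M`. For `i ∈ I` we get `i • a • x ∈ I • p • M = p • I • M = p • span {x}`,
so `(i * a) • x = t • x` for some `t ∈ p`; cancelling `x` gives `i * a ∈ p`, hence `i ∈ p` when
`a ∉ p`. Thus `I ≤ p` and `x ∈ I • M ≤ p • M`. -/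

open Submodule

section

variable {S M : Type*} [CommSemiring S] [AddCommMonoid M] [Module S M]

theorem Submodule.smul_mem_smul_smul_of_mem_smul {I J : Ideal S} {N : Submodule S M} {i : S}
    {y : M} (hi : i ∈ I) (hy : y ∈ J • N) : i • y ∈ J • I • N := by
  rw [← Submodule.mul_smul, mul_comm, Submodule.mul_smul]
  exact smul_mem_smul hi hy

theorem Ideal.le_of_span_singleton_eq_smul_top {p I : Ideal S} (hp : p.IsPrime) {a : S} {x : M}
    (hx : ∀ s s' : S, s • x = s' • x → s = s')
    (hI : Submodule.span S {x} = I • (⊤ : Submodule S M))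
    (hax : a • x ∈ p • (⊤ : Submodule S M)) (ha : a ∉ p) : I ≤ p := by
  intro i hi
  have hiax : i • a • x ∈ p • Submodule.span S {x} := hI ▸ smul_mem_smul_smul_of_mem_smul hi hax
  obtain ⟨t, ht, htx⟩ := mem_smul_span_singleton.mp hiax
  have hti : t = i * a := hx _ _ (htx.trans (smul_smul i a x))
  exact (hp.mem_or_mem (hti ▸ ht)).resolve_right ha

end

/-- Let p be a prime ideal and M an MC multiplication semimodule. If ax ∈ pM,
then a ∈ p or x ∈ pM. -/
theorem mem_prime_or_mem_smul {S M : Type*} [CommSemiring S]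
    [AddCommMonoid M] [Module S M] (p : Ideal S) (hp : p.IsPrime)
    (hMC : ∀ (s s' : S) (m : M), m ≠ 0 → s • m = s' • m → s = s')
    (hM : ∀ N : Submodule S M, ∃ I : Ideal S, N = I • (⊤ : Submodule S M))
    (a : S) (x : M) (hax : a • x ∈ p • (⊤ : Submodule S M)) :
    a ∈ p ∨ x ∈ p • (⊤ : Submodule S M) := by
  by_cases ha : a ∈ p
  · exact Or.inl ha
  by_cases hx0 : x = 0
  · exact Or.inr (hx0 ▸ zero_mem _)
  obtain ⟨I, hI⟩ := hM (span S {x})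
  have hIp : I ≤ p :=
    Ideal.le_of_span_singleton_eq_smul_top hp (fun s s' => hMC s s' x hx0) hI hax ha
  exact Or.inr (smul_mono_left hIp (hI ▸ mem_span_singleton_self x))
end

section
/- If M is a multiplication S-semimodule, then M = θ(M)M, where θ(M) = Σ_{m ∈ M} (Sm : M). -/
/-! In a multiplication semimodule the cyclic subsemimodule `S m` is `I M` for some ideal `I`,
and any such `I` lies in `(S m : M)`; hence `m ∈ (S m : M) M ⊆ θ(M) M`. -/

/-- The ideal (N : M) = {s : S | sM ⊆ N}. -/
def colonIdeal {S M : Type*} [CommSemiring S] [AddCommMonoid M] [Module S M]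
    (N : Submodule S M) : Ideal S where
  carrier := {s : S | ∀ x : M, s • x ∈ N}
  add_mem' := fun ha hb x => by rw [add_smul]; exact N.add_mem (ha x) (hb x)
  zero_mem' := fun x => by rw [zero_smul]; exact N.zero_mem
  smul_mem' := fun c a ha x => by
    rw [smul_eq_mul, mul_smul]; exact N.smul_mem c (ha x)

section

variable {S M : Type*} [CommSemiring S] [AddCommMonoid M] [Module S M]

theorem le_colonIdeal_smul_top (I : Ideal S) : I ≤ colonIdeal (I • (⊤ : Submodule S M)) :=
  fun _ hs _ => Submodule.smul_mem_smul hs trivial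

theorem le_colonIdeal_smul_top_of_eq_smul_top {N : Submodule S M} {I : Ideal S}
    (hN : N = I • (⊤ : Submodule S M)) : N ≤ colonIdeal N • (⊤ : Submodule S M) := by
  conv_lhs => rw [hN]
  exact Submodule.smul_mono_left (hN ▸ le_colonIdeal_smul_top I)

end

/-- If M is a multiplication semimodule, then M = θ(M)M where
θ(M) = Σ_{m ∈ M} (Sm : M). -/
theorem theta_smul_eq_top {S M : Type*} [CommSemiring S] [AddCommMonoid M]
    [Module S M]
    (hM : ∀ N : Submodule S M, ∃ I : Ideal S, N = I • (⊤ : Submodule S M)) :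
    (⨆ m : M, colonIdeal (Submodule.span S {m})) • (⊤ : Submodule S M) = ⊤ := by
  refine eq_top_iff.mpr fun m _ => ?_
  obtain ⟨I, hI⟩ := hM (Submodule.span S {m})
  have hm : m ∈ colonIdeal (Submodule.span S {m}) • (⊤ : Submodule S M) :=
    le_colonIdeal_smul_top_of_eq_smul_top hI (Submodule.mem_span_singleton_self m)
  exact Submodule.smul_mono_left
    (le_iSup (fun m => colonIdeal (Submodule.span S {m})) m) hm
end

section
/- Every multiplicatively cancellative multiplication S-semimodule M is finitely generated. -/
/-!
Fix `m ≠ 0` and an ideal `I` with `S m = I M`, and write `m = ∑ aᵥ v` with `aᵥ ∈ I` over a finite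
set `t`. For `x ∈ M` and `s ∈ I` we have `s x = φₓ(s) m` for a unique `φₓ(s) ∈ S`, and cancelling `m`
gives `s φₓ(s') = s' φₓ(s)`. Hence `s x = φₓ(s) ∑ aᵥ v = s y` with `y = ∑ φₓ(aᵥ) v ∈ span t`, so
`I (S x) ≤ I (S y)`. Writing `S x = J M`, `S y = J' M`, this reads `J m ⊆ J' m`, whence `J ≤ J'` by
cancellation and `x ∈ S y ⊆ span t`.
-/

open Submodule

section

variable {S M : Type*} [CommSemiring S] [AddCommMonoid M] [Module S M]

theorem Ideal.le_of_smul_span_singleton_le {J J' : Ideal S} {m : M}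
    (hm : Function.Injective fun s : S => s • m)
    (h : J • Submodule.span S {m} ≤ J' • Submodule.span S {m}) : J ≤ J' := by
  intro k hk
  obtain ⟨k', hk', hkk'⟩ := mem_smul_span_singleton.mp
    (h (mem_smul_span_singleton.mpr ⟨k, hk, rfl⟩))
  exact hm hkk' ▸ hk'

theorem Submodule.le_of_ideal_smul_le_ideal_smul
    (hM : ∀ N : Submodule S M, ∃ I : Ideal S, N = I • (⊤ : Submodule S M))
    {I : Ideal S} {m : M} (hm : Function.Injective fun s : S => s • m)
    (hI : I • (⊤ : Submodule S M) = span S {m})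
    {N N' : Submodule S M} (h : I • N ≤ I • N') : N ≤ N' := by
  obtain ⟨J, rfl⟩ := hM N
  obtain ⟨J', rfl⟩ := hM N'
  have smul_eq (K : Ideal S) : I • K • (⊤ : Submodule S M) = K • span S {m} := by
    rw [← Submodule.mul_smul, mul_comm, Submodule.mul_smul, hI]
  rw [smul_eq, smul_eq] at h
  exact smul_mono_left (Ideal.le_of_smul_span_singleton_le hm h)

theorem Submodule.ideal_smul_span_singleton_le {I : Ideal S} {x y : M}
    (h : ∀ s ∈ I, s • x = s • y) : I • span S {x} ≤ I • span S {y} := by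
  refine smul_le.mpr fun s hs n hn => ?_
  obtain ⟨c, rfl⟩ := mem_span_singleton.mp hn
  rw [smul_comm, h s hs, smul_comm]
  exact smul_mem_smul hs (smul_mem _ c (mem_span_singleton_self y))

theorem exists_mem_span_forall_smul_eq {I : Ideal S} {m : M}
    (hm : Function.Injective fun s : S => s • m)
    (hI : I • (⊤ : Submodule S M) ≤ span S {m})
    {t : Finset M} {a : M → S} (ha : ∀ v, a v ∈ I) (hsum : ∑ v ∈ t, a v • v = m) (x : M) :
    ∃ y ∈ span S (t : Set M), ∀ s ∈ I, s • x = s • y := by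
  choose φ hφ using fun s : I => mem_span_singleton.mp (hI (smul_mem_smul s.2 (mem_top (x := x))))
  have comm (s s' : I) : (s : S) * φ s' = s' * φ s :=
    hm <| by simp only [mul_smul, hφ, smul_comm (s : S)]
  refine ⟨∑ v ∈ t, φ ⟨a v, ha v⟩ • v,
    sum_mem fun v hv => smul_mem _ _ (subset_span hv), fun s hs => ?_⟩
  calc s • x = φ ⟨s, hs⟩ • ∑ v ∈ t, a v • v := by rw [hsum, hφ]
    _ = ∑ v ∈ t, (s * φ ⟨a v, ha v⟩) • v := by
        simp only [Finset.smul_sum, smul_smul]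
        exact Finset.sum_congr rfl fun v _ => by rw [mul_comm, comm ⟨a v, ha v⟩ ⟨s, hs⟩]
    _ = s • ∑ v ∈ t, φ ⟨a v, ha v⟩ • v := by simp only [Finset.smul_sum, smul_smul]

end

/-- Every MC multiplication semimodule is finitely generated. -/
theorem fg_of_MC_multiplication {S M : Type*} [CommSemiring S]
    [AddCommMonoid M] [Module S M]
    (hMC : ∀ (s s' : S) (m : M), m ≠ 0 → s • m = s' • m → s = s')
    (hM : ∀ N : Submodule S M, ∃ I : Ideal S, N = I • (⊤ : Submodule S M)) :
    (⊤ : Submodule S M).FG := by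
  rcases subsingleton_or_nontrivial M with _ | _
  · exact Subsingleton.elim (⊥ : Submodule S M) ⊤ ▸ fg_bot
  obtain ⟨m, hm0⟩ := exists_ne (0 : M)
  have hm : Function.Injective fun s : S => s • m := fun s s' => hMC s s' m hm0
  obtain ⟨I, hI⟩ := hM (span S {m})
  have hmI : m ∈ I • span S (Set.range id) := by
    rw [Set.range_id, span_univ, ← hI]
    exact mem_span_singleton_self m
  obtain ⟨a, ha, hsum⟩ := (mem_ideal_smul_span_iff_exists_sum I id m).mp hmI
  refine ⟨a.support, eq_top_iff.mpr fun x _ => ?_⟩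
  obtain ⟨y, hy, hxy⟩ := exists_mem_span_forall_smul_eq hm hI.ge ha hsum x
  have hspan : span S {x} ≤ span S {y} :=
    le_of_ideal_smul_le_ideal_smul hM hm hI.symm (ideal_smul_span_singleton_le hxy)
  exact (span_singleton_le_iff_mem y _).mpr hy (hspan (mem_span_singleton_self x))
end

section
/- If S is a semidomain and M is a multiplicatively cancellative multiplication S-semimodule, then M is torsionfree: for nonzero t ∈ S, tm = tm' implies m = m'. -/
/-! In a multiplication module write `S m = K M` and `S m' = I M`. If `t m = t m'` with `t` cancellable,
then every `a` with `a m ∈ S m'` satisfies `a m = a m'`. Since `I (S m) = I K M = K (S m')`, each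
`b m'` with `b ∈ K` equals some `a m` with `a ∈ I`, hence equals `a m'`, so `b = a ∈ I`. Thus
`K ⊆ I`, so `m ∈ S m'`, and the case `a = 1` gives `m = m'`. -/

namespace Submodule

variable {S M : Type*} [CommSemiring S] [AddCommMonoid M] [Module S M]

theorem smul_eq_smul_of_smul_mem_span_singleton {t a : S} {m m' : M} (ht : IsLeftRegular t)
    (hm' : Function.Injective (· • m' : S → M)) (h : t • m = t • m')
    (ha : a • m ∈ span S {m'}) : a • m = a • m' := by
  obtain ⟨g, hg⟩ := mem_span_singleton.1 ha
  have hta : t * a = t * g := hm' <| by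
    calc (t * a) • m' = a • t • m' := by rw [mul_smul, smul_comm]
      _ = t • g • m' := by rw [← h, smul_comm, hg]
      _ = (t * g) • m' := (mul_smul t g m').symm
  rw [← hg, ht hta]

theorem le_of_span_singleton_eq_smul_top {t : S} {m m' : M} {I K : Ideal S}
    (ht : IsLeftRegular t) (hm' : Function.Injective (· • m' : S → M)) (h : t • m = t • m')
    (hI : span S {m'} = I • (⊤ : Submodule S M)) (hK : span S {m} = K • (⊤ : Submodule S M)) :
    K ≤ I := by
  intro b hb
  have hbm' : b • m' ∈ I • span S {m} := by
    rw [hK, ← Submodule.mul_smul, mul_comm, Submodule.mul_smul, ← hI]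
    exact smul_mem_smul hb (mem_span_singleton_self m')
  obtain ⟨a, haI, hab⟩ := mem_smul_span_singleton.1 hbm'
  have ham : a • m ∈ span S {m'} := hI ▸ smul_mem_smul haI mem_top
  have hba : b = a := hm' <| by
    simp only [← hab, smul_eq_smul_of_smul_mem_span_singleton ht hm' h ham]
  exact hba ▸ haI

end Submodule

/-- Over a semidomain, an MC multiplication semimodule is torsionfree. -/
theorem torsionfree_of_MC_multiplication {S M : Type*} [CommSemiring S]
    [AddCommMonoid M] [Module S M]
    (hdom : ∀ a : S, a ≠ 0 → ∀ b c : S, a * b = a * c → b = c)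
    (hMC : ∀ (s s' : S) (m : M), m ≠ 0 → s • m = s' • m → s = s')
    (hM : ∀ N : Submodule S M, ∃ I : Ideal S, N = I • (⊤ : Submodule S M)) :
    ∀ t : S, t ≠ 0 → ∀ m m' : M, t • m = t • m' → m = m' := by
  intro t ht m m' h
  rcases eq_or_ne m' 0 with rfl | hm'
  · by_contra hm
    exact ht (hMC t 0 m hm (by rw [h, smul_zero, zero_smul]))
  have ht' : IsLeftRegular t := hdom t ht
  have hm'inj : Function.Injective (· • m' : S → M) := fun s s' => hMC s s' m' hm'
  obtain ⟨I, hI⟩ := hM (Submodule.span S {m'})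
  obtain ⟨K, hK⟩ := hM (Submodule.span S {m})
  have hKI : K ≤ I := Submodule.le_of_span_singleton_eq_smul_top ht' hm'inj h hI hK
  have hm : (1 : S) • m ∈ Submodule.span S {m'} := by
    rw [one_smul, hI]
    exact Submodule.smul_mono_left hKI (hK ▸ Submodule.mem_span_singleton_self m)
  simpa only [one_smul] using
    Submodule.smul_eq_smul_of_smul_mem_span_singleton ht' hm'inj h hm
end

section
/- Every multiplicatively cancellative multiplication S-semimodule is a projective S-semimodule. -/
/-!
Fix `m ≠ 0` and write `span {m} = I M` and `m = ∑ aᵢ vᵢ` with `aᵢ ∈ I`. Since `s ↦ s m` is injective,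
`aᵢ x ∈ span {m}` can be written uniquely as `φᵢ(x) m`, and the `φᵢ` are linear. For `y = ∑ φᵢ(x) vᵢ`
one computes `aᵢ y = aᵢ x`. The ideal `Λ = {c | c x = c y}` then contains every `J` with `J M = span {z}`,
`z ≠ 0`, so `Λ M = M`; hence `span {m} = I Λ M = Λ span {m}`, and cancellation at `m` gives `1 ∈ Λ`,
i.e. `x = y`. So `(φᵢ, vᵢ)` is a dual basis.
-/

open Submodule

namespace Module

variable (S M : Type*) [CommSemiring S] [AddCommMonoid M] [Module S M]

def IsMultiplication : Prop :=
  ∀ N : Submodule S M, ∃ I : Ideal S, N = I • (⊤ : Submodule S M)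

def IsMulCancellative : Prop :=
  ∀ m : M, m ≠ 0 → Function.Injective fun c : S => c • m

end Module

open Module

theorem Module.projective_of_dualBasis {S M ι : Type*} [Semiring S] [AddCommMonoid M] [Module S M]
    (s : Finset ι) (v : ι → M) (φ : ι → M →ₗ[S] S) (h : ∀ x, ∑ i ∈ s, φ i x • v i = x) :
    Projective S M := by
  refine ⟨⟨∑ i ∈ s, Finsupp.lsingle (v i) ∘ₗ φ i, fun x => ?_⟩⟩
  simp [map_sum, h x]

section CommSemiring

variable {S M : Type*} [CommSemiring S] [AddCommMonoid M] [Module S M]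

noncomputable def spanSingletonCoord {m : M} (hm : Function.Injective fun c : S => c • m) (a : S)
    (ha : ∀ x : M, a • x ∈ span S {m}) : M →ₗ[S] S :=
  (LinearEquiv.ofInjective (LinearMap.toSpanSingleton S M m) hm).symm.toLinearMap ∘ₗ
    (a • LinearMap.id).codRestrict _ fun x => by
      simpa [LinearMap.range_toSpanSingleton] using ha x

theorem spanSingletonCoord_smul {m : M} (hm : Function.Injective fun c : S => c • m) (a : S)
    (ha : ∀ x : M, a • x ∈ span S {m}) (x : M) : spanSingletonCoord hm a ha x • m = a • x :=
  LinearEquiv.ofInjective_symm_apply (f := LinearMap.toSpanSingleton S M m) (h := hm) _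

section DualBasis

variable {ι : Type*} {s : Finset ι} {a : ι → S} {v : ι → M} {m : M}

theorem eq_of_forall_mul_eq_of_sum_smul_eq (hm : Function.Injective fun c : S => c • m)
    (hsum : ∑ i ∈ s, a i • v i = m) {e e' : S} (h : ∀ i ∈ s, a i * e = a i * e') : e = e' := by
  apply hm
  simp only [← hsum, Finset.smul_sum, smul_smul]
  exact Finset.sum_congr rfl fun i hi => by rw [mul_comm, h i hi, mul_comm]

theorem smul_sum_coord_smul_eq (hm : Function.Injective fun c : S => c • m)
    {φ : ι → M →ₗ[S] S} (hφ : ∀ i x, φ i x • m = a i • x) (hsum : ∑ i ∈ s, a i • v i = m)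
    (j : ι) (x : M) : a j • ∑ i ∈ s, φ i x • v i = a j • x := by
  have hφm : φ j m = a j := hm (hφ j m)
  calc a j • ∑ i ∈ s, φ i x • v i = ∑ i ∈ s, φ i x • φ j (v i) • m := by
        simp only [Finset.smul_sum, hφ]; exact Finset.sum_congr rfl fun i _ => smul_comm _ _ _
    _ = ∑ i ∈ s, φ j (v i) • a i • x := by
        simp only [← hφ]; exact Finset.sum_congr rfl fun i _ => smul_comm _ _ _
    _ = φ j m • x := by
        rw [← hsum, map_sum, Finset.sum_smul]
        exact Finset.sum_congr rfl fun i _ => by rw [map_smul, smul_eq_mul, mul_smul, smul_comm]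
    _ = a j • x := by rw [hφm]

end DualBasis

theorem Module.IsMultiplication.eq_top_of_forall_le [Nontrivial M] (hMC : IsMulCancellative S M)
    (hM : IsMultiplication S M) {L : Ideal S}
    (hL : ∀ z : M, z ≠ 0 → ∀ J : Ideal S, span S {z} = J • ⊤ → J ≤ L) : L = ⊤ := by
  have hLM : L • (⊤ : Submodule S M) = ⊤ := by
    refine eq_top_iff.mpr fun z _ => ?_
    obtain rfl | hz := eq_or_ne z 0
    · exact zero_mem _
    obtain ⟨J, hJ⟩ := hM (span S {z})
    exact smul_mono_left (hL z hz J hJ) (hJ ▸ mem_span_singleton_self z)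
  obtain ⟨m, hm⟩ := exists_ne (0 : M)
  obtain ⟨I, hI⟩ := hM (span S {m})
  have hspan : span S {m} = L • span S {m} :=
    calc span S {m} = I • L • ⊤ := by rw [hLM, hI]
      _ = L • I • ⊤ := by
        rw [← smul_assoc, ← smul_assoc, Ideal.smul_eq_mul, Ideal.smul_eq_mul, mul_comm]
      _ = L • span S {m} := by rw [hI]
  obtain ⟨c, hcL, hcm⟩ := mem_smul_span_singleton.mp (hspan ▸ mem_span_singleton_self m)
  rw [Ideal.eq_top_iff_one, ← hMC m hm (hcm.trans (one_smul S m).symm)]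
  exact hcL

theorem Module.IsMultiplication.eq_of_forall_smul_eq [Nontrivial M] (hMC : IsMulCancellative S M)
    (hM : IsMultiplication S M) {ι : Type*} {s : Finset ι} {a : ι → S}
    (hcancel : ∀ e e' : S, (∀ i ∈ s, a i * e = a i * e') → e = e') {x y : M}
    (hxy : ∀ i ∈ s, a i • x = a i • y) : x = y := by
  let L := LinearMap.eqLocus (LinearMap.toSpanSingleton S M x) (LinearMap.toSpanSingleton S M y)
  have hL : L = ⊤ := hM.eq_top_of_forall_le hMC fun z hz J hJ c hc => by
    have hmem : ∀ w : M, c • w ∈ span S {z} := fun w => hJ ▸ smul_mem_smul hc mem_top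
    obtain ⟨e, he⟩ := mem_span_singleton.mp (hmem x)
    obtain ⟨e', he'⟩ := mem_span_singleton.mp (hmem y)
    have hee' : e = e' := hcancel e e' fun i hi => hMC z hz <| by
      simp only [mul_smul, he, he', smul_comm (a i) c, hxy i hi]
    show c • x = c • y
    rw [← he, ← he', hee']
  simpa [L] using (Ideal.eq_top_iff_one L).mp hL

end CommSemiring

/-- Every MC multiplication semimodule is projective. -/
theorem projective_of_MC_multiplication {S M : Type*} [CommSemiring S]
    [AddCommMonoid M] [Module S M]
    (hMC : ∀ (s s' : S) (m : M), m ≠ 0 → s • m = s' • m → s = s')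
    (hM : ∀ N : Submodule S M, ∃ I : Ideal S, N = I • (⊤ : Submodule S M)) :
    Module.Projective S M := by
  have hMC' : IsMulCancellative S M := fun m hm s s' => hMC s s' m hm
  rcases subsingleton_or_nontrivial M with _ | _
  · infer_instance
  obtain ⟨m, hm⟩ := exists_ne (0 : M)
  obtain ⟨I, hI⟩ := hM (span S {m})
  obtain ⟨a, haI, hsum⟩ := (mem_ideal_smul_span_iff_exists_sum I id m).mp <| by
    rw [Set.range_id, span_univ, ← hI]
    exact mem_span_singleton_self m
  have ha : ∀ w x, a w • x ∈ span S {m} := fun w x => hI ▸ smul_mem_smul (haI w) mem_top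
  let φ w := spanSingletonCoord (hMC' m hm) (a w) (ha w)
  have hφ : ∀ w x, φ w x • m = a w • x := fun w => spanSingletonCoord_smul _ _ (ha w)
  replace hsum : ∑ w ∈ a.support, a w • id w = m := hsum
  exact projective_of_dualBasis a.support id φ fun x =>
    IsMultiplication.eq_of_forall_smul_eq hMC' hM
      (fun _ _ => eq_of_forall_mul_eq_of_sum_smul_eq (hMC' m hm) hsum)
      fun w _ => smul_sum_coord_smul_eq (hMC' m hm) hφ hsum w x
end

section
/- Let S be a yoked commutative semiring in which every maximal ideal is subtractive, M a cancellative S-semimodule, and p a maximal ideal of S. Then N = {m ∈ M : m = qm for some q ∈ p} is a subsemimodule of M. -/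
/-! In a ring one would take `q + r - q * r` as the element of `p` fixing `m + n` when `q • m = m`
and `r • n = n`. A yoked semiring supplies `s` with `q * r + s = q + r` or `q + r + s = q * r`,
and subtractivity of `p` puts `s` in `p`. In the first case `s` fixes both `m` and `n`; in the
second `s` acts as `-1` on them, so `s * s` fixes both. -/

section FixedPoints

variable {S M : Type*} [CommSemiring S] [AddCommMonoid M] [Module S M] [IsLeftCancelAdd M]
  {q r s : S} {m : M}

theorem smul_eq_self_of_mul_add_eq_add (hm : q • m = m) (h : q * r + s = q + r) :
    s • m = m := by
  have hqr : (q * r) • m = r • m := by rw [mul_comm, mul_smul, hm]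
  have := congrArg (· • m) h
  simp only [add_smul, hqr, hm] at this
  exact add_left_cancel (this.trans (add_comm _ _))

theorem add_smul_eq_zero_of_add_add_eq_mul (hm : q • m = m) (h : q + r + s = q * r) :
    m + s • m = 0 := by
  have hqr : (q * r) • m = r • m := by rw [mul_comm, mul_smul, hm]
  have := congrArg (· • m) h
  simp only [add_smul, hqr, hm] at this
  refine add_left_cancel (a := r • m) ?_
  rw [add_zero, add_left_comm, ← add_assoc, this]

theorem mul_self_smul_eq_self_of_add_smul_eq_zero (h : m + s • m = 0) : (s * s) • m = m :=
  add_left_cancel (a := s • m) <| by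
    rw [mul_smul, ← smul_add, h, smul_zero, add_comm, h]

end FixedPoints

theorem Ideal.exists_mem_smul_add_eq_add {S M : Type*} [CommSemiring S] [AddCommMonoid M]
    [Module S M] [IsLeftCancelAdd M]
    (hyoked : ∀ a b : S, ∃ t : S, a + t = b ∨ b + t = a)
    {p : Ideal S} (hsub : ∀ a b : S, a + b ∈ p → b ∈ p → a ∈ p)
    {q r : S} (hq : q ∈ p) (hr : r ∈ p) {m n : M} (hm : q • m = m) (hn : r • n = n) :
    ∃ t ∈ p, t • (m + n) = m + n := by
  have hqr : q * r ∈ p := p.mul_mem_right r hq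
  obtain ⟨s, hs | hs⟩ := hyoked (q * r) (q + r)
  · have hsp : s ∈ p := hsub s (q * r) (by rw [add_comm, hs]; exact p.add_mem hq hr) hqr
    refine ⟨s, hsp, ?_⟩
    rw [smul_add, smul_eq_self_of_mul_add_eq_add hm hs,
      smul_eq_self_of_mul_add_eq_add hn (by rwa [mul_comm, add_comm r])]
  · have hsp : s ∈ p := hsub s (q + r) (by rwa [add_comm, hs]) (p.add_mem hq hr)
    refine ⟨s * s, p.mul_mem_right s hsp, ?_⟩
    rw [smul_add,
      mul_self_smul_eq_self_of_add_smul_eq_zero (add_smul_eq_zero_of_add_add_eq_mul hm hs),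
      mul_self_smul_eq_self_of_add_smul_eq_zero
        (add_smul_eq_zero_of_add_add_eq_mul hn (by rwa [mul_comm, add_comm r]))]

/-- Over a yoked semiring with subtractive maximal ideals, for a cancellative
semimodule M and maximal ideal p, the set {m : m = qm for some q ∈ p} is a
subsemimodule of M. -/
theorem exists_submodule_of_fixed_set {S M : Type*} [CommSemiring S]
    [AddCommMonoid M] [Module S M]
    (hyoked : ∀ a b : S, ∃ t : S, a + t = b ∨ b + t = a)
    (hsub : ∀ q : Ideal S, q.IsMaximal → ∀ a b : S, a + b ∈ q → b ∈ q → a ∈ q)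
    (hcanc : ∀ m m1 m2 : M, m + m1 = m + m2 → m1 = m2)
    (p : Ideal S) (hp : p.IsMaximal) :
    ∃ N : Submodule S M, (N : Set M) = {m : M | ∃ q ∈ p, m = q • m} := by
  have : IsLeftCancelAdd M := ⟨fun a _ _ h => hcanc a _ _ h⟩
  refine ⟨{
    carrier := {m : M | ∃ q ∈ p, m = q • m}
    zero_mem' := ⟨0, p.zero_mem, (smul_zero 0).symm⟩
    add_mem' := ?_
    smul_mem' := ?_ }, rfl⟩
  · rintro m n ⟨q, hq, hm⟩ ⟨r, hr, hn⟩
    obtain ⟨t, ht, hmn⟩ := p.exists_mem_smul_add_eq_add hyoked (hsub p hp) hq hr hm.symm hn.symm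
    exact ⟨t, ht, hmn.symm⟩
  · rintro c m ⟨q, hq, hm⟩
    exact ⟨q, hq, by rw [smul_comm, ← hm]⟩
end

section
/- Let S be a yoked commutative semiring whose maximal ideals are all subtractive, and M a cancellative S-semimodule generated by elements {m_λ}. Then M is a multiplication semimodule if and only if there exist ideals I_λ of S with Sm_λ = I_λ M for all λ. -/
/-!
Given the `I_λ`, every submodule `N` equals `(N : M) M`, where `(N : M)` is the colon ideal
`N.colon Set.univ`; only `N ≤ (N : M) M` needs proof. Membership of `n ∈ N` in `(N : M) M` is
a local question, checked at each maximal ideal `q`. If some `I_λ ⊄ q`, pick `a ∈ I_λ \ q`: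
writing `a n = r m_λ`, one gets `r a ∈ (N : M)` and `a² n = (r a) m_λ ∈ (N : M) M`. If every
`I_λ ⊆ q`, then `M = q M`, so `m_λ = p m_λ` for some `p ∈ q`; yokedness gives `t` with
`p + t = 1` or `1 + t = p`, subtractivity of `q` puts `t ∉ q`, and cancellation yields
`t m_λ = 0`. Thus `M` vanishes after localizing at `q`, and `n` is killed by an element
outside `q`.
-/

open Submodule

section Semiring

variable {S M : Type*} [Semiring S] [AddCommMonoid M] [Module S M]

theorem exists_notMem_smul_eq_zero_of_smul_eq_self [IsLeftCancelAdd M]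
    (hyoked : ∀ a b : S, ∃ t : S, a + t = b ∨ b + t = a) {q : Ideal S} (hq : q ≠ ⊤)
    (hsub : ∀ a b : S, a + b ∈ q → b ∈ q → a ∈ q) {p : S} (hp : p ∈ q) {x : M}
    (hx : p • x = x) : ∃ t ∉ q, t • x = 0 := by
  obtain ⟨t, ht | ht⟩ := hyoked p 1
  · refine ⟨t, fun htq => hq (q.eq_top_iff_one.mpr (ht ▸ q.add_mem hp htq)), ?_⟩
    refine add_left_cancel (a := x) ?_
    calc x + t • x = (p + t) • x := by rw [add_smul, hx]
      _ = x + 0 := by rw [ht, one_smul, add_zero]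
  · refine ⟨t, fun htq => hq (q.eq_top_iff_one.mpr (hsub 1 t (ht ▸ hp) htq)), ?_⟩
    refine add_left_cancel (a := x) ?_
    calc x + t • x = (1 + t) • x := by rw [add_smul, one_smul]
      _ = x + 0 := by rw [ht, hx, add_zero]

end Semiring

namespace Submodule

variable {S M : Type*} [CommSemiring S] [AddCommMonoid M] [Module S M]

theorem mem_of_forall_isMaximal_exists_notMem_smul_mem {P : Submodule S M} {x : M}
    (h : ∀ q : Ideal S, q.IsMaximal → ∃ s ∉ q, s • x ∈ P) : x ∈ P := by
  by_contra hx
  have hne : P.colon {x} ≠ ⊤ := by simpa [colon_eq_top_iff_subset] using hx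
  obtain ⟨q, hq, hle⟩ := Ideal.exists_le_maximal _ hne
  obtain ⟨s, hsq, hs⟩ := h q hq
  exact hsq (hle (mem_colon_singleton.mpr hs))

theorem exists_notMem_smul_eq_zero_of_span_eq_top {ι : Type*} {m : ι → M}
    (hgen : span S (Set.range m) = ⊤) {q : Ideal S} [q.IsPrime]
    (hm : ∀ l, ∃ t ∉ q, t • m l = 0) (x : M) : ∃ s ∉ q, s • x = 0 := by
  let f := LocalizedModule.mkLinearMap q.primeCompl M
  have hker : LinearMap.ker f = ⊤ := by
    rw [eq_top_iff, ← hgen, span_le]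
    rintro _ ⟨l, rfl⟩
    exact (IsLocalizedModule.mem_ker_iff q.primeCompl).mpr (hm l)
  exact (IsLocalizedModule.mem_ker_iff q.primeCompl).mp (hker ▸ mem_top : x ∈ LinearMap.ker f)

theorem exists_mem_smul_eq_self_of_forall_le {ι : Type*} {m : ι → M}
    (hgen : span S (Set.range m) = ⊤) {I : ι → Ideal S}
    (hI : ∀ l, span S {m l} = I l • (⊤ : Submodule S M)) {q : Ideal S} (hIq : ∀ l, I l ≤ q)
    (l : ι) : ∃ p ∈ q, p • m l = m l := by
  have htop : q • (⊤ : Submodule S M) = ⊤ := by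
    refine eq_top_iff.mpr (hgen.symm.trans_le (span_le.mpr ?_))
    rintro _ ⟨k, rfl⟩
    exact smul_mono_left (hIq k) (hI k ▸ mem_span_singleton_self (m k))
  have hspan : span S {m l} = q • span S {m l} := by
    rw [hI l, ← smul_assoc, Ideal.smul_eq_mul, mul_comm, ← Ideal.smul_eq_mul, smul_assoc, htop]
  exact mem_smul_span_singleton.mp (hspan ▸ mem_span_singleton_self (m l))

theorem mul_self_smul_mem_colon_smul_top {N : Submodule S M} {x₀ n : M} {I : Ideal S}
    (hI : span S {x₀} = I • (⊤ : Submodule S M)) {a : S} (ha : a ∈ I) (hn : n ∈ N) :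
    (a * a) • n ∈ N.colon Set.univ • (⊤ : Submodule S M) := by
  have hmem : ∀ y : M, a • y ∈ span S {x₀} := fun y => hI ▸ smul_mem_smul ha mem_top
  obtain ⟨r, hr⟩ := mem_span_singleton.mp (hmem n)
  have hra : r * a ∈ N.colon Set.univ := by
    refine mem_colon.mpr fun y _ => ?_
    obtain ⟨c, hc⟩ := mem_span_singleton.mp (hmem y)
    have : (r * a) • y = (c * a) • n := by
      rw [mul_smul, ← hc, smul_comm, hr, mul_smul]
    exact this ▸ N.smul_mem _ hn
  have : (a * a) • n = (r * a) • x₀ := by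
    rw [mul_smul, ← hr, ← mul_smul, mul_comm]
  exact this ▸ smul_mem_smul hra mem_top

theorem colon_smul_top_le (N : Submodule S M) : N.colon Set.univ • (⊤ : Submodule S M) ≤ N :=
  smul_le.mpr fun _ hr y _ => mem_colon.mp hr y trivial

theorem le_colon_smul_top_of_span_singleton_eq [IsLeftCancelAdd M]
    (hyoked : ∀ a b : S, ∃ t : S, a + t = b ∨ b + t = a)
    (hsub : ∀ q : Ideal S, q.IsMaximal → ∀ a b : S, a + b ∈ q → b ∈ q → a ∈ q)
    {ι : Type*} {m : ι → M} (hgen : span S (Set.range m) = ⊤) {I : ι → Ideal S}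
    (hI : ∀ l, span S {m l} = I l • (⊤ : Submodule S M)) (N : Submodule S M) :
    N ≤ N.colon Set.univ • (⊤ : Submodule S M) := by
  intro n hn
  refine mem_of_forall_isMaximal_exists_notMem_smul_mem fun q hq => ?_
  by_cases hIq : ∀ l, I l ≤ q
  · have hkill : ∀ l, ∃ t ∉ q, t • m l = 0 := fun l => by
      obtain ⟨p, hp, hpm⟩ := exists_mem_smul_eq_self_of_forall_le hgen hI hIq l
      exact exists_notMem_smul_eq_zero_of_smul_eq_self hyoked hq.ne_top (hsub q hq) hp hpm
    obtain ⟨s, hsq, hs⟩ := exists_notMem_smul_eq_zero_of_span_eq_top (q := q) hgen hkill n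
    exact ⟨s, hsq, hs ▸ zero_mem _⟩
  · obtain ⟨l, hl⟩ := not_forall.mp hIq
    obtain ⟨a, ha, haq⟩ := SetLike.not_le_iff_exists.mp hl
    exact ⟨a * a, hq.isPrime.mul_notMem haq haq,
      mul_self_smul_mem_colon_smul_top (hI l) ha hn⟩

end Submodule

/-- Over a yoked semiring with subtractive maximal ideals, a cancellative
semimodule M = Σ Sm_λ is a multiplication semimodule iff there exist ideals I_λ
with Sm_λ = I_λ M for all λ. -/
theorem multiplication_iff_generators {S M : Type*} [CommSemiring S]
    [AddCommMonoid M] [Module S M] {ι : Type*}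
    (hyoked : ∀ a b : S, ∃ t : S, a + t = b ∨ b + t = a)
    (hsub : ∀ q : Ideal S, q.IsMaximal → ∀ a b : S, a + b ∈ q → b ∈ q → a ∈ q)
    (hcanc : ∀ m m1 m2 : M, m + m1 = m + m2 → m1 = m2)
    (m : ι → M) (hgen : (⊤ : Submodule S M) = Submodule.span S (Set.range m)) :
    (∀ N : Submodule S M, ∃ I : Ideal S, N = I • (⊤ : Submodule S M)) ↔
    (∃ I : ι → Ideal S, ∀ l : ι,
      Submodule.span S {m l} = I l • (⊤ : Submodule S M)) := by
  refine ⟨fun h => ⟨fun l => (h (span S {m l})).choose, fun l => (h _).choose_spec⟩, ?_⟩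
  rintro ⟨I, hI⟩ N
  have : IsLeftCancelAdd M := ⟨hcanc⟩
  exact ⟨N.colon Set.univ, le_antisymm
    (le_colon_smul_top_of_span_singleton_eq hyoked hsub hgen.symm hI N) (colon_smul_top_le N)⟩
end

section
/- Let S be a yoked commutative semiring whose maximal ideals are subtractive, and M a cancellative faithful multiplication S-semimodule. Then M is finitely generated if and only if M ≠ pM for every maximal ideal p of S. -/
/-!
(⇐) If `x ∉ pM` and `Sx = IM`, then `I ⊄ p` while `I ⊆ (Sx : M)`; so no maximal ideal contains
all the colon ideals `(Sx : M)`, hence `1` lies in finitely many of them and the corresponding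
`x`'s generate `M`.

(⇒) A Nakayama argument without subtraction. If `M = S m₁ + ⋯ + S mₙ = pM`, remove the generators
one at a time while keeping some `v ∉ p` with `vM` inside the subtractive closure of the span `N`
of the remaining ones. Since `vm ∈ pM`, some `(v + b)m + c = am + d` with `a, b ∈ p`, `c, d ∈ N`;
comparing `a` and `v + b` in the yoked semiring yields `t ∉ p` (here `p` is subtractive) with
`a + t = v + b` or `v + b + t = a`, and cancellation puts `tm` in the closure of `N`. At the end
`vM = 0` with `v ∉ p`, contradicting faithfulness.
-/

open Submodule

namespace Submodule

variable {S M : Type*} [CommSemiring S] [AddCommMonoid M] [Module S M]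

def IsSubtractive (N : Submodule S M) : Prop :=
  ∀ x y : M, x + y ∈ N → y ∈ N → x ∈ N

/-- The smallest subtractive submodule containing `N`. -/
def subtractiveClosure (N : Submodule S M) : Submodule S M where
  carrier := {x | ∃ c ∈ N, x + c ∈ N}
  zero_mem' := ⟨0, N.zero_mem, by simp⟩
  add_mem' := by
    rintro x y ⟨c, hc, hxc⟩ ⟨d, hd, hyd⟩
    refine ⟨c + d, add_mem hc hd, ?_⟩
    rw [add_add_add_comm]
    exact add_mem hxc hyd
  smul_mem' := by
    rintro r x ⟨c, hc, hxc⟩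
    exact ⟨r • c, N.smul_mem r hc, by rw [← smul_add]; exact N.smul_mem r hxc⟩

theorem mem_subtractiveClosure {N : Submodule S M} {x : M} :
    x ∈ subtractiveClosure N ↔ ∃ c ∈ N, x + c ∈ N := Iff.rfl

theorem le_subtractiveClosure (N : Submodule S M) : N ≤ subtractiveClosure N :=
  fun x hx => ⟨0, N.zero_mem, by simpa using hx⟩

@[simp]
theorem subtractiveClosure_bot : subtractiveClosure (⊥ : Submodule S M) = ⊥ := by
  ext x
  simp [mem_subtractiveClosure]

theorem isSubtractive_subtractiveClosure (N : Submodule S M) :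
    (subtractiveClosure N).IsSubtractive := by
  rintro x c ⟨e, he, hxe⟩ ⟨f, hf, hcf⟩
  refine ⟨c + f + e, add_mem hcf he, ?_⟩
  rw [show x + (c + f + e) = x + c + e + f by abel]
  exact add_mem hxe hf

theorem smul_subtractiveClosure_le (p : Ideal S) (N : Submodule S M) :
    p • subtractiveClosure N ≤ subtractiveClosure (p • N) := by
  refine smul_le.2 fun a ha x ⟨c, hc, hxc⟩ => ⟨a • c, smul_mem_smul ha hc, ?_⟩
  rw [← smul_add]
  exact smul_mem_smul ha hxc

theorem smul_mem_subtractiveClosure {N K : Submodule S M} {t : S}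
    (h : ∀ y ∈ N, t • y ∈ subtractiveClosure K) {x : M} (hx : x ∈ subtractiveClosure N) :
    t • x ∈ subtractiveClosure K := by
  obtain ⟨c, hc, hxc⟩ := hx
  refine isSubtractive_subtractiveClosure K _ (t • c) ?_ (h c hc)
  rw [← smul_add]
  exact h _ hxc

theorem mem_smul_span_insert {p : Ideal S} {m y : M} {s : Set M}
    (hy : y ∈ p • span S (insert m s)) :
    ∃ a ∈ p, ∃ d ∈ span S s, y = a • m + d := by
  rw [span_insert, smul_sup] at hy
  obtain ⟨z, hz, d, hd, rfl⟩ := mem_sup.1 hy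
  obtain ⟨a, ha, rfl⟩ := mem_smul_span_singleton.1 hz
  exact ⟨a, ha, d, smul_le_right hd, rfl⟩

theorem smul_mem_smul_of_smul_top_eq_top {p : Ideal S} (hpM : p • (⊤ : Submodule S M) = ⊤)
    {N : Submodule S M} {v : S} (hv : ∀ x, v • x ∈ N) (x : M) : v • x ∈ p • N := by
  have hle : (⊤ : Submodule S M) ≤ N.comap (v • LinearMap.id) := fun x _ => hv x
  have hx : x ∈ p • (⊤ : Submodule S M) := by rw [hpM]; exact mem_top
  exact smul_comap_le_comap_smul _ N p (smul_mono_right p hle hx)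

theorem smul_mem_subtractiveClosure_of_add_eq [IsLeftCancelAdd M] {N : Submodule S M}
    {a e t : S} {m c d : M} (hc : c ∈ N) (hd : d ∈ N) (heq : e • m + c = a • m + d)
    (ht : a + t = e ∨ e + t = a) : t • m ∈ subtractiveClosure N := by
  rcases ht with rfl | rfl <;> rw [add_smul, add_assoc] at heq
  · exact ⟨c, hc, add_left_cancel heq ▸ hd⟩
  · exact ⟨d, hd, add_left_cancel heq ▸ hc⟩

end Submodule

namespace Ideal

variable {S : Type*} [CommSemiring S]

theorem exists_notMem_add_eq_or_add_eq (hyoked : ∀ a b : S, ∃ t : S, a + t = b ∨ b + t = a)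
    {p : Ideal S} (hsub : p.IsSubtractive) {a e : S} (ha : a ∈ p) (he : e ∉ p) :
    ∃ t ∉ p, a + t = e ∨ e + t = a := by
  obtain ⟨t, ht⟩ := hyoked a e
  refine ⟨t, fun htp => he ?_, ht⟩
  rcases ht with rfl | hea
  · exact p.add_mem ha htp
  · exact hsub e t (hea ▸ ha) htp

end Ideal

section Nakayama

variable {S M : Type*} [CommSemiring S] [AddCommMonoid M] [Module S M]

theorem exists_notMem_smul_mem_subtractiveClosure [IsLeftCancelAdd M]
    (hyoked : ∀ a b : S, ∃ t : S, a + t = b ∨ b + t = a) {p : Ideal S} (hsub : p.IsSubtractive)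
    (hpM : p • (⊤ : Submodule S M) = ⊤) {v : S} (hv : v ∉ p) {m : M} {s : Set M}
    (hvM : ∀ x, v • x ∈ subtractiveClosure (span S (insert m s))) :
    ∃ t ∉ p, t • m ∈ subtractiveClosure (span S s) := by
  obtain ⟨c, hc, hmc⟩ :=
    smul_subtractiveClosure_le p _ (smul_mem_smul_of_smul_top_eq_top hpM hvM m)
  obtain ⟨b, hb, c', hc', rfl⟩ := mem_smul_span_insert hc
  obtain ⟨a, ha, d, hd, hmcd⟩ := mem_smul_span_insert hmc
  have hvb : v + b ∉ p := fun h => hv (hsub v b h hb)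
  obtain ⟨t, ht, hat⟩ := Ideal.exists_notMem_add_eq_or_add_eq hyoked hsub ha hvb
  refine ⟨t, ht, smul_mem_subtractiveClosure_of_add_eq hc' hd ?_ hat⟩
  rw [add_smul, add_assoc, hmcd]

theorem mul_smul_mem_subtractiveClosure {t v : S} {m : M} {s : Set M}
    (htm : t • m ∈ subtractiveClosure (span S s))
    (hvM : ∀ x, v • x ∈ subtractiveClosure (span S (insert m s))) (x : M) :
    (t * v) • x ∈ subtractiveClosure (span S s) := by
  have hspan : span S (insert m s) ≤ (subtractiveClosure (span S s)).comap (t • LinearMap.id) :=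
    span_le.2 <| Set.insert_subset_iff.2
      ⟨htm, fun y hy => le_subtractiveClosure _ (smul_mem _ t (subset_span hy))⟩
  rw [mul_smul]
  exact smul_mem_subtractiveClosure (fun y hy => hspan hy) (hvM x)

theorem exists_notMem_forall_smul_eq_zero [IsLeftCancelAdd M]
    (hyoked : ∀ a b : S, ∃ t : S, a + t = b ∨ b + t = a) {p : Ideal S} (hp : p.IsPrime)
    (hsub : p.IsSubtractive) (hpM : p • (⊤ : Submodule S M) = ⊤) (s : Finset M) {v : S}
    (hv : v ∉ p) (hvM : ∀ x, v • x ∈ subtractiveClosure (span S (s : Set M))) :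
    ∃ u ∉ p, ∀ x : M, u • x = 0 := by
  classical
  induction s using Finset.induction_on generalizing v with
  | empty => exact ⟨v, hv, by simpa using hvM⟩
  | insert m s _ ih =>
    rw [Finset.coe_insert] at hvM
    obtain ⟨t, ht, htm⟩ := exists_notMem_smul_mem_subtractiveClosure hyoked hsub hpM hv hvM
    exact ih (hp.mul_notMem ht hv) (mul_smul_mem_subtractiveClosure htm hvM)

theorem smul_top_ne_top_of_fg [IsLeftCancelAdd M]
    (hyoked : ∀ a b : S, ∃ t : S, a + t = b ∨ b + t = a)
    (hfaith : ∀ t : S, (∀ x : M, t • x = 0) → t = 0) {p : Ideal S} (hp : p.IsPrime)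
    (hsub : p.IsSubtractive) (hfg : (⊤ : Submodule S M).FG) : p • (⊤ : Submodule S M) ≠ ⊤ := by
  intro hpM
  obtain ⟨s, hs⟩ := hfg
  obtain ⟨u, hu, hu0⟩ := exists_notMem_forall_smul_eq_zero hyoked hp hsub hpM s hp.one_notMem
    fun x => le_subtractiveClosure _ (by simp [hs])
  exact hu (hfaith u hu0 ▸ p.zero_mem)

end Nakayama

section Multiplication

variable {S M : Type*} [CommSemiring S] [AddCommMonoid M] [Module S M]

theorem exists_colon_not_le_of_smul_top_ne_top
    (hM : ∀ N : Submodule S M, ∃ I : Ideal S, N = I • (⊤ : Submodule S M)) {p : Ideal S}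
    (hpM : p • (⊤ : Submodule S M) ≠ ⊤) : ∃ x : M, ¬ (S ∙ x).colon Set.univ ≤ p := by
  obtain ⟨x, -, hx⟩ := SetLike.exists_of_lt (lt_top_iff_ne_top.2 hpM)
  obtain ⟨I, hI⟩ := hM (S ∙ x)
  refine ⟨x, fun hle => hx ?_⟩
  have hIle : I ≤ (S ∙ x).colon Set.univ :=
    fun r hr => mem_colon.2 fun y _ => hI ▸ smul_mem_smul hr mem_top
  have : S ∙ x ≤ p • ⊤ := hI ▸ smul_mono_left (hIle.trans hle)
  exact this (mem_span_singleton_self x)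

theorem iSup_colon_span_singleton_eq_top
    (hM : ∀ N : Submodule S M, ∃ I : Ideal S, N = I • (⊤ : Submodule S M))
    (h : ∀ p : Ideal S, p.IsMaximal → p • (⊤ : Submodule S M) ≠ ⊤) :
    ⨆ x : M, (S ∙ x).colon Set.univ = ⊤ := by
  by_contra hT
  obtain ⟨p, hp, hTp⟩ := Ideal.exists_le_maximal _ hT
  obtain ⟨x, hx⟩ := exists_colon_not_le_of_smul_top_ne_top hM (h p hp)
  exact hx ((le_iSup _ x).trans hTp)

theorem fg_top_of_iSup_colon_span_singleton_eq_top
    (h : ⨆ x : M, (S ∙ x).colon Set.univ = ⊤) : (⊤ : Submodule S M).FG := by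
  have h1 : (1 : S) ∈ ⨆ x : M, (S ∙ x).colon Set.univ := h ▸ mem_top
  obtain ⟨s, hs⟩ := mem_iSup_iff_exists_finset.1 h1
  refine ⟨s, eq_top_iff.2 fun y _ => ?_⟩
  have hle : ⨆ x ∈ s, (S ∙ x).colon Set.univ ≤ (span S (s : Set M)).colon Set.univ :=
    iSup₂_le fun x hx => colon_mono (span_mono (by simpa using hx)) subset_rfl
  simpa using mem_colon.1 (hle hs) y trivial

end Multiplication

/-- Over a yoked semiring with subtractive maximal ideals, a cancellative
faithful multiplication semimodule M is finitely generated iff M ≠ pM for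
every maximal ideal p. -/
theorem fg_iff_ne_smul_maximal {S M : Type*} [CommSemiring S]
    [AddCommMonoid M] [Module S M]
    (hyoked : ∀ a b : S, ∃ t : S, a + t = b ∨ b + t = a)
    (hsub : ∀ q : Ideal S, q.IsMaximal → ∀ a b : S, a + b ∈ q → b ∈ q → a ∈ q)
    (hcanc : ∀ m m1 m2 : M, m + m1 = m + m2 → m1 = m2)
    (hfaith : ∀ t : S, (∀ x : M, t • x = 0) → t = 0)
    (hM : ∀ N : Submodule S M, ∃ I : Ideal S, N = I • (⊤ : Submodule S M)) :
    (⊤ : Submodule S M).FG ↔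
    (∀ p : Ideal S, p.IsMaximal → p • (⊤ : Submodule S M) ≠ ⊤) := by
  have : IsLeftCancelAdd M := ⟨hcanc⟩
  exact ⟨fun hfg p hp => smul_top_ne_top_of_fg hyoked hfaith hp.isPrime (hsub p hp) hfg,
    fun h => fg_top_of_iSup_colon_span_singleton_eq_top (iSup_colon_span_singleton_eq_top hM h)⟩
end

section
/- Let S be a yoked commutative semiring whose maximal ideals are subtractive, M a cancellative faithful multiplication S-semimodule, and suppose M ≠ pM for every maximal ideal p. If I and J are ideals of S with IM ⊆ JM, then I ⊆ J. -/
/-!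
Suppose `a ∈ I` but `a ∉ J`, and choose a maximal ideal `p` containing `(J : a)` and `x ∉ pM`.
Since `M` is a multiplication semimodule there is `q ∉ p` with `qM ⊆ Sx`, so
`q • a • x ∈ q(JM) ⊆ Jx`, i.e. `(q a) x = j x` for some `j ∈ J`. In the absence of subtraction,
yokedness and cancellation provide a "difference" `t` of `q a` and `j` with `t x = 0`; then
`t q` kills `M`, so `t q = 0` by faithfulness and `q a q = j q ∈ J`. Hence `q² ∈ (J : a) ⊆ p`,
contradicting `q ∉ p`.
-/

open Submodule

section

variable {S M : Type*} [CommSemiring S] [AddCommMonoid M] [Module S M]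

theorem exists_notMem_forall_smul_mem_span_singleton
    (hM : ∀ N : Submodule S M, ∃ I : Ideal S, N = I • (⊤ : Submodule S M))
    {p : Ideal S} {x : M} (hx : x ∉ p • (⊤ : Submodule S M)) :
    ∃ q ∉ p, ∀ m : M, q • m ∈ span S {x} := by
  obtain ⟨A, hA⟩ := hM (span S {x})
  obtain ⟨q, hqA, hqp⟩ : ∃ q ∈ A, q ∉ p := SetLike.not_le_iff_exists.1 fun hAp =>
    hx (smul_mono_left hAp (hA ▸ mem_span_singleton_self x))
  exact ⟨q, hqp, fun m => hA ▸ smul_mem_smul hqA mem_top⟩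

theorem exists_mem_smul_eq_smul_of_mem_smul_top {q : S} {x z : M}
    (hq : ∀ m : M, q • m ∈ span S {x}) {J : Ideal S} (hz : z ∈ J • (⊤ : Submodule S M)) :
    ∃ j ∈ J, j • x = q • z := by
  have hrange : LinearMap.range (q • LinearMap.id : M →ₗ[S] M) ≤ span S {x} := by
    rintro _ ⟨m, rfl⟩
    exact hq m
  have hmap : q • z ∈ (J • (⊤ : Submodule S M)).map (q • LinearMap.id) := mem_map_of_mem hz
  rw [map_smul'', Submodule.map_top] at hmap
  exact mem_smul_span_singleton.1 (smul_mono_right J hrange hmap)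

theorem exists_smul_eq_zero_of_smul_eq_smul
    (hyoked : ∀ a b : S, ∃ t : S, a + t = b ∨ b + t = a)
    (hcanc : ∀ m m1 m2 : M, m + m1 = m + m2 → m1 = m2)
    {c d : S} {x : M} (h : c • x = d • x) :
    ∃ t : S, t • x = 0 ∧ (c + t = d ∨ d + t = c) := by
  obtain ⟨t, ht⟩ := hyoked c d
  refine ⟨t, ?_, ht⟩
  rcases ht with ht | ht
  · exact hcanc (c • x) _ _ (by rw [← add_smul, ht, h, add_zero])
  · exact hcanc (d • x) _ _ (by rw [← add_smul, ht, ← h, add_zero])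

theorem mul_eq_mul_of_smul_eq_smul
    (hyoked : ∀ a b : S, ∃ t : S, a + t = b ∨ b + t = a)
    (hcanc : ∀ m m1 m2 : M, m + m1 = m + m2 → m1 = m2)
    (hfaith : ∀ t : S, (∀ x : M, t • x = 0) → t = 0)
    {q : S} {x : M} (hq : ∀ m : M, q • m ∈ span S {x})
    {c d : S} (h : c • x = d • x) :
    c * q = d * q := by
  obtain ⟨t, htx, ht⟩ := exists_smul_eq_zero_of_smul_eq_smul hyoked hcanc h
  have htq : t * q = 0 := hfaith _ fun m => by
    obtain ⟨s, hs⟩ := mem_span_singleton.1 (hq m)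
    rw [mul_smul, ← hs, smul_comm, htx, smul_zero]
  rcases ht with ht | ht
  · rw [← ht, add_mul, htq, add_zero]
  · rw [← ht, add_mul, htq, add_zero]

end

theorem ideal_le_of_smul_le_of_yoked_general {S M : Type*} [CommSemiring S]
    [AddCommMonoid M] [Module S M]
    (hyoked : ∀ a b : S, ∃ t : S, a + t = b ∨ b + t = a)
    (hcanc : ∀ m m1 m2 : M, m + m1 = m + m2 → m1 = m2)
    (hfaith : ∀ t : S, (∀ x : M, t • x = 0) → t = 0)
    (hM : ∀ N : Submodule S M, ∃ I : Ideal S, N = I • (⊤ : Submodule S M))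
    (hne : ∀ p : Ideal S, p.IsMaximal → p • (⊤ : Submodule S M) ≠ ⊤)
    (I J : Ideal S) (hIJ : I • (⊤ : Submodule S M) ≤ J • (⊤ : Submodule S M)) :
    I ≤ J := by
  intro a ha
  by_contra haJ
  have hcolon : J.colon {a} ≠ ⊤ := fun h =>
    haJ (by simpa using (Ideal.eq_top_iff_one _).1 h)
  obtain ⟨p, hp, hcolon_le⟩ := Ideal.exists_le_maximal _ hcolon
  obtain ⟨x, hx⟩ : ∃ x : M, x ∉ p • (⊤ : Submodule S M) :=
    not_forall.1 fun h => hne p hp (eq_top_iff'.2 h)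
  obtain ⟨q, hqp, hq⟩ := exists_notMem_forall_smul_mem_span_singleton hM hx
  obtain ⟨j, hj, hjx⟩ :=
    exists_mem_smul_eq_smul_of_mem_smul_top hq (hIJ (smul_mem_smul ha mem_top))
  have hqaq : q * a * q = j * q :=
    mul_eq_mul_of_smul_eq_smul hyoked hcanc hfaith hq (by rw [mul_smul, hjx])
  have hqq : q * q ∈ p := hcolon_le <| mem_colon_singleton.2 <| by
    rw [smul_eq_mul, mul_right_comm, hqaq]
    exact J.mul_mem_right q hj
  exact hqp (hp.isPrime.mem_of_pow_mem 2 (by rwa [sq]))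

/-- Over a yoked semiring with subtractive maximal ideals, for a cancellative
faithful multiplication semimodule with M ≠ pM for each maximal p:
IM ⊆ JM implies I ⊆ J. -/
theorem ideal_le_of_smul_le_of_yoked {S M : Type*} [CommSemiring S]
    [AddCommMonoid M] [Module S M]
    (hyoked : ∀ a b : S, ∃ t : S, a + t = b ∨ b + t = a)
    (hsub : ∀ q : Ideal S, q.IsMaximal → ∀ a b : S, a + b ∈ q → b ∈ q → a ∈ q)
    (hcanc : ∀ m m1 m2 : M, m + m1 = m + m2 → m1 = m2)
    (hfaith : ∀ t : S, (∀ x : M, t • x = 0) → t = 0)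
    (hM : ∀ N : Submodule S M, ∃ I : Ideal S, N = I • (⊤ : Submodule S M))
    (hne : ∀ p : Ideal S, p.IsMaximal → p • (⊤ : Submodule S M) ≠ ⊤)
    (I J : Ideal S) (hIJ : I • (⊤ : Submodule S M) ≤ J • (⊤ : Submodule S M)) :
    I ≤ J :=
  ideal_le_of_smul_le_of_yoked_general hyoked hcanc hfaith hM hne I J hIJ
end
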